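/- Let μ_1 be a spherically symmetric probability distribution supported in B(0,1) ∩ L_1 for a d-dimensional subspace L_1 of R^D, with μ_1({0}) < 1, and let ψ(t) = μ_1({x : |x^T v| < t}) for a fixed unit vector v ∈ L_1 (independent of v by symmetry). Let L̂_1,...,L̂_K be d-subspaces with d_G(L_1, L̂_j) > ε for all j, where d_G is the principal-angle Grassmannian metric. Then E_{μ_1}[min_j dist(x, L̂_j)^p] > τ_0 ε^p, where τ_0 = (1 − μ_1({0})) · 2^{p−1} · ψ^{−1}((1 + (2K−1)μ_1({0}))/(2K))^p / (π√d)^p. -/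

import Mathlib

open scoped RealInnerProductSpace
noncomputable section

abbrev E (D : ℕ) := EuclideanSpace ℝ (Fin D)

/-- projection onto `L` as an endomorphism of `E D` -/
def projL {D : ℕ} (L : Submodule ℝ (E D)) : E D →ₗ[ℝ] E D :=
  L.subtype ∘ₗ (L.orthogonalProjectionOnto).toLinearMap

/-- projection matrix of `L` -/
def projMat {D : ℕ} (L : Submodule ℝ (E D)) : Matrix (Fin D) (Fin D) ℝ :=
  LinearMap.toMatrix (EuclideanSpace.basisFun (Fin D) ℝ).toBasis
    (EuclideanSpace.basisFun (Fin D) ℝ).toBasis (projL L)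

/-- eigenvalues of a matrix (0 if not Hermitian) -/
def eigs {D : ℕ} (M : Matrix (Fin D) (Fin D) ℝ) : Fin D → ℝ :=
  if h : M.IsHermitian then h.eigenvalues else 0

/-- the Grassmannian distance: the square root of the sum of the squares of the
principal angles between two `d`-dimensional subspaces.  The eigenvalues of
`P_F P_G P_F` are the `d` values `cos² θ_i` together with `D - d` zeros, so
`∑ arccos(√λ_i)² = ∑ θ_i² + (D-d)(π/2)²`. -/
def dG {D : ℕ} (d : ℕ) (F G : Submodule ℝ (E D)) : ℝ :=
  Real.sqrt (∑ i, (Real.arccos (Real.sqrt (eigs (projMat F * projMat G * projMat F) i))) ^ 2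
    - (D - d : ℝ) * (Real.pi / 2) ^ 2)


open MeasureTheory

/-!
For each `j`, let `m` be the smallest eigenvalue of the compression of `P_{L̂_j}` to `L₁`, with
unit eigenvector `u_j ∈ L₁`, and write `m = cos² θ`. Expanding in an eigenbasis gives
`dist(x, L̂_j) ≥ sin θ · |⟪x, u_j⟫|` on `L₁`. The nonzero eigenvalues of `P_{L₁} P_{L̂_j} P_{L₁}`
are Rayleigh quotients of `P_{L̂_j}` on `L₁`, hence all `≥ m`, and for `m > 0` there are at least
`d` of them; so `d_G(L₁, L̂_j) ≤ √d θ`, and with Jordan's inequality `sin θ ≥ 2θ/π` this yields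
`dist(x, L̂_j) ≥ 2 d_G(L₁, L̂_j) |⟪x, u_j⟫| / (π √d)`.

By spherical symmetry (a reflection of `L₁` maps `v` to `u_j`) each slab `{|⟪x, u_j⟫| < s}` has
mass `ψ(s)`. All slabs contain the atom at `0`, so their union has mass at most
`μ₁{0} + K (ψ(s) - μ₁{0}) = (1 + μ₁{0}) / 2`, and off the union the integrand is at least
`(2 s min_j d_G(L₁, L̂_j) / (π √d))^p`; Markov's inequality concludes.
-/

open Real

namespace LinearMap.IsSymmetric

variable {V : Type*} [NormedAddCommGroup V] [InnerProductSpace ℝ V] [FiniteDimensional ℝ V]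
  {T : V →ₗ[ℝ] V} (hT : T.IsSymmetric) {n : ℕ} (hn : Module.finrank ℝ V = n)

theorem eigenvalues_eq_inner (i : Fin n) :
    hT.eigenvalues hn i = ⟪T (hT.eigenvectorBasis hn i), hT.eigenvectorBasis hn i⟫ := by
  rw [hT.apply_eigenvectorBasis, real_inner_smul_left, real_inner_self_eq_norm_sq,
    (hT.eigenvectorBasis hn).norm_eq_one]
  simp

theorem inner_apply_self_eq_sum (x : V) :
    ⟪T x, x⟫ = ∑ i, hT.eigenvalues hn i * ⟪hT.eigenvectorBasis hn i, x⟫ ^ 2 := by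
  rw [← (hT.eigenvectorBasis hn).sum_inner_mul_inner (T x) x]
  refine Finset.sum_congr rfl fun i _ => ?_
  rw [hT, hT.apply_eigenvectorBasis, real_inner_smul_right, real_inner_comm x]
  simp only [RCLike.ofReal_real_eq_id, id_eq]
  ring

theorem mul_norm_sq_le_inner_apply_self {c : ℝ} (hc : ∀ i, c ≤ hT.eigenvalues hn i) (x : V) :
    c * ‖x‖ ^ 2 ≤ ⟪T x, x⟫ := by
  rw [hT.inner_apply_self_eq_sum hn, ← (hT.eigenvectorBasis hn).sum_sq_inner_right x,
    Finset.mul_sum]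
  exact Finset.sum_le_sum fun i _ => mul_le_mul_of_nonneg_right (hc i) (sq_nonneg _)

theorem one_sub_eigenvalues_mul_sq_le (h1 : ∀ i, hT.eigenvalues hn i ≤ 1) (k : Fin n) (x : V) :
    (1 - hT.eigenvalues hn k) * ⟪hT.eigenvectorBasis hn k, x⟫ ^ 2 ≤ ‖x‖ ^ 2 - ⟪T x, x⟫ := by
  rw [hT.inner_apply_self_eq_sum hn, ← (hT.eigenvectorBasis hn).sum_sq_inner_right x,
    ← Finset.sum_sub_distrib]
  calc (1 - hT.eigenvalues hn k) * ⟪hT.eigenvectorBasis hn k, x⟫ ^ 2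
      ≤ ∑ i, (1 - hT.eigenvalues hn i) * ⟪hT.eigenvectorBasis hn i, x⟫ ^ 2 :=
        Finset.single_le_sum
          (f := fun i => (1 - hT.eigenvalues hn i) * ⟪hT.eigenvectorBasis hn i, x⟫ ^ 2)
          (fun i _ => mul_nonneg (sub_nonneg.2 (h1 i)) (sq_nonneg _)) (Finset.mem_univ k)
    _ = _ := Finset.sum_congr rfl fun i _ => by ring

end LinearMap.IsSymmetric

namespace Submodule

variable {F : Type*} [NormedAddCommGroup F] [InnerProductSpace ℝ F] (K L : Submodule ℝ F)
  [L.HasOrthogonalProjection]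

theorem real_inner_starProjection_self (x : F) :
    ⟪L.starProjection x, x⟫ = ‖L.starProjection x‖ ^ 2 := by
  simpa using L.re_inner_starProjection_eq_normSq x

theorem norm_sub_starProjection_sq (x : F) :
    ‖x - L.starProjection x‖ ^ 2 = ‖x‖ ^ 2 - ⟪L.starProjection x, x⟫ := by
  rw [L.norm_sq_eq_add_norm_sq_starProjection x, starProjection_orthogonal_val,
    real_inner_starProjection_self]
  ring

theorem real_inner_starProjection_self_le (x : F) : ⟪L.starProjection x, x⟫ ≤ ‖x‖ ^ 2 := by
  linarith [L.norm_sub_starProjection_sq x, sq_nonneg ‖x - L.starProjection x‖]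

theorem infDist_eq_norm_sub_starProjection (x : F) :
    Metric.infDist x L = ‖x - L.starProjection x‖ := by
  rw [Metric.infDist_eq_iInf, L.starProjection_minimal x]
  simp only [dist_eq_norm]
  rfl

section Compression

variable [K.HasOrthogonalProjection]

def starProjectionCompression : K →ₗ[ℝ] K :=
  K.orthogonalProjectionOnto.toLinearMap ∘ₗ L.starProjection.toLinearMap ∘ₗ K.subtype

theorem inner_starProjectionCompression (x y : K) :
    ⟪K.starProjectionCompression L x, y⟫ = ⟪L.starProjection x, (y : F)⟫ :=
  K.inner_orthogonalProjectionOnto_eq_of_mem_right y _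

theorem isSymmetric_starProjectionCompression :
    (K.starProjectionCompression L).IsSymmetric := fun x y => by
  rw [inner_starProjectionCompression, real_inner_comm _ (x : K), inner_starProjectionCompression,
    L.inner_starProjection_left_eq_right, real_inner_comm]

end Compression

variable [FiniteDimensional ℝ K] {n : ℕ} (hn : Module.finrank ℝ K = n)

theorem eigenvalues_starProjectionCompression_nonneg (i : Fin n) :
    0 ≤ (K.isSymmetric_starProjectionCompression L).eigenvalues hn i := by
  rw [LinearMap.IsSymmetric.eigenvalues_eq_inner, inner_starProjectionCompression,
    real_inner_starProjection_self]
  positivity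

theorem eigenvalues_starProjectionCompression_le_one (i : Fin n) :
    (K.isSymmetric_starProjectionCompression L).eigenvalues hn i ≤ 1 := by
  rw [LinearMap.IsSymmetric.eigenvalues_eq_inner, inner_starProjectionCompression]
  refine (L.real_inner_starProjection_self_le _).trans_eq ?_
  rw [norm_coe, OrthonormalBasis.norm_eq_one, one_pow]

theorem sqrt_one_sub_eigenvalues_mul_abs_inner_le_infDist (k : Fin n) {x : F} (hx : x ∈ K) :
    √(1 - (K.isSymmetric_starProjectionCompression L).eigenvalues hn k)
        * |⟪x, (K.isSymmetric_starProjectionCompression L).eigenvectorBasis hn k⟫|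
      ≤ Metric.infDist x L := by
  set hT := K.isSymmetric_starProjectionCompression L
  have h := hT.one_sub_eigenvalues_mul_sq_le hn
    (K.eigenvalues_starProjectionCompression_le_one L hn) k ⟨x, hx⟩
  rw [inner_starProjectionCompression] at h
  change (1 - _) * ⟪(_ : F), x⟫ ^ 2 ≤ ‖x‖ ^ 2 - ⟪L.starProjection x, x⟫ at h
  rw [L.infDist_eq_norm_sub_starProjection, ← sqrt_sq (norm_nonneg _),
    L.norm_sub_starProjection_sq, ← sqrt_sq_eq_abs,
    ← sqrt_mul (sub_nonneg.2 (K.eigenvalues_starProjectionCompression_le_one L hn k))]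
  exact sqrt_le_sqrt (by rwa [real_inner_comm])

end Submodule

section Grassmannian

variable {D : ℕ}

theorem toEuclideanLin_projMat (L : Submodule ℝ (E D)) :
    Matrix.toEuclideanLin (projMat L) = L.starProjection.toLinearMap := by
  rw [Matrix.toEuclideanLin_eq_toLin_orthonormal]
  exact Matrix.toLin_toMatrix _ _ _

theorem toEuclideanLin_projMat_mul (F G : Submodule ℝ (E D)) :
    Matrix.toEuclideanLin (projMat F * projMat G * projMat F)
      = F.starProjection.toLinearMap ∘ₗ G.starProjection.toLinearMap ∘ₗ
          F.starProjection.toLinearMap := by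
  simp only [Matrix.toLpLin_mul_same, toEuclideanLin_projMat, LinearMap.comp_assoc]

theorem isHermitian_projMat_mul (F G : Submodule ℝ (E D)) :
    (projMat F * projMat G * projMat F).IsHermitian := by
  rw [← Matrix.isSymmetric_toEuclideanLin_iff, toEuclideanLin_projMat_mul]
  intro x y
  simp only [LinearMap.comp_apply, ContinuousLinearMap.coe_coe,
    Submodule.inner_starProjection_left_eq_right]

theorem eigs_projMat_mul (F G : Submodule ℝ (E D)) :
    eigs (projMat F * projMat G * projMat F) = (isHermitian_projMat_mul F G).eigenvalues :=
  dif_pos _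

theorem inner_starProjection_comp_apply_self {F : Submodule ℝ (E D)} (G : Submodule ℝ (E D))
    {x : E D} (hx : x ∈ F) :
    ⟪F.starProjection (G.starProjection (F.starProjection x)), x⟫ = ⟪G.starProjection x, x⟫ := by
  rw [F.inner_starProjection_left_eq_right, F.starProjection_eq_self_iff.2 hx]

theorem le_eigenvalues_projMat_mul {F G : Submodule ℝ (E D)} {c : ℝ}
    (hc : ∀ x ∈ F, c * ‖x‖ ^ 2 ≤ ⟪G.starProjection x, x⟫) {i : Fin D}
    (hi : (isHermitian_projMat_mul F G).eigenvalues i ≠ 0) :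
    c ≤ (isHermitian_projMat_mul F G).eigenvalues i := by
  set hM := isHermitian_projMat_mul F G
  set w := hM.eigenvectorBasis i
  have hw : F.starProjection (G.starProjection (F.starProjection w)) = hM.eigenvalues i • w := by
    have := congrArg (WithLp.toLp 2) (hM.mulVec_eigenvectorBasis i)
    rw [← Matrix.toLpLin_apply, toEuclideanLin_projMat_mul] at this
    exact this
  have hwF : w ∈ F := by
    have : w = (hM.eigenvalues i)⁻¹ • F.starProjection (G.starProjection (F.starProjection w)) := by
      rw [hw, smul_smul, inv_mul_cancel₀ hi, one_smul]
    rw [this]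
    exact F.smul_mem _ (F.starProjection_apply_mem _)
  have hnorm : ‖w‖ = 1 := hM.eigenvectorBasis.norm_eq_one i
  calc c = c * ‖w‖ ^ 2 := by rw [hnorm, one_pow, mul_one]
    _ ≤ ⟪G.starProjection w, w⟫ := hc w hwF
    _ = hM.eigenvalues i := by
      rw [← inner_starProjection_comp_apply_self G hwF, hw, real_inner_smul_left,
        real_inner_self_eq_norm_sq, hnorm, one_pow, mul_one]

theorem finrank_le_rank_projMat_mul {F G : Submodule ℝ (E D)} {c : ℝ} (hc0 : 0 < c)
    (hc : ∀ x ∈ F, c * ‖x‖ ^ 2 ≤ ⟪G.starProjection x, x⟫) :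
    Module.finrank ℝ F ≤ (projMat F * projMat G * projMat F).rank := by
  set f := Matrix.toEuclideanLin (projMat F * projMat G * projMat F)
  have hinj : Function.Injective (f ∘ₗ F.subtype) := by
    rw [← LinearMap.ker_eq_bot, LinearMap.ker_eq_bot']
    intro y hy
    have hfy : F.starProjection (G.starProjection (F.starProjection y)) = 0 := by
      simpa only [f, toEuclideanLin_projMat_mul, LinearMap.comp_apply, Submodule.subtype_apply,
        ContinuousLinearMap.coe_coe] using hy
    have hy0 := hc y y.2
    rw [← inner_starProjection_comp_apply_self G y.2, hfy, inner_zero_left, ← mul_zero c] at hy0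
    have : ‖(y : E D)‖ ^ 2 = 0 := le_antisymm (le_of_mul_le_mul_left hy0 hc0) (sq_nonneg _)
    exact Subtype.ext (norm_eq_zero.1 (pow_eq_zero_iff two_ne_zero |>.1 this))
  rw [Matrix.rank_eq_finrank_range_toLin _ (PiLp.basisFun 2 ℝ (Fin D)) (PiLp.basisFun 2 ℝ (Fin D)),
    ← LinearMap.finrank_range_of_inj hinj]
  exact Submodule.finrank_mono (LinearMap.range_comp_le_range _ _)

theorem dG_le_sqrt_mul_arccos {d : ℕ} {F G : Submodule ℝ (E D)} (hF : Module.finrank ℝ F = d)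
    {c : ℝ} (hc0 : 0 ≤ c) (hc : ∀ x ∈ F, c * ‖x‖ ^ 2 ≤ ⟪G.starProjection x, x⟫) :
    dG d F G ≤ √d * arccos √c := by
  have hM := isHermitian_projMat_mul F G
  set θ := arccos √c
  set δ := (π / 2) ^ 2 - θ ^ 2
  obtain ⟨r, hr⟩ : ∃ r, Fintype.card {i // hM.eigenvalues i ≠ 0} = r := ⟨_, rfl⟩
  have hθ0 : 0 ≤ θ := arccos_nonneg _
  have hθ : θ ≤ π / 2 := arccos_le_pi_div_two.2 (sqrt_nonneg _)
  have hδ : 0 ≤ δ := sub_nonneg.2 (pow_le_pow_left₀ hθ0 hθ 2)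
  have hterm : ∀ i, arccos √(hM.eigenvalues i) ^ 2
      ≤ (π / 2) ^ 2 - (if hM.eigenvalues i ≠ 0 then 1 else 0) * δ := by
    intro i
    by_cases hi : hM.eigenvalues i = 0
    · simp [hi]
    · have : arccos √(hM.eigenvalues i) ≤ θ :=
        arccos_le_arccos (sqrt_le_sqrt (le_eigenvalues_projMat_mul hc hi))
      simp only [ne_eq, hi, not_false_eq_true, if_true, one_mul, δ]
      nlinarith [arccos_nonneg √(hM.eigenvalues i)]
  have hsum : ∑ i, arccos √(hM.eigenvalues i) ^ 2 ≤ D * (π / 2) ^ 2 - r * δ := by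
    refine (Finset.sum_le_sum fun i _ => hterm i).trans_eq ?_
    rw [Finset.sum_sub_distrib, ← Finset.sum_mul, Finset.sum_boole, Finset.sum_const,
      Finset.card_univ, Fintype.card_fin, nsmul_eq_mul, ← Fintype.card_subtype, hr]
  have hrδ : (d - r) * δ ≤ 0 := by
    rcases hc0.eq_or_lt with rfl | hcpos
    · simp [θ, δ]
    · have hdr : (d : ℝ) ≤ r := by
        rw [← hF, ← hr, ← hM.rank_eq_card_non_zero_eigs]
        exact_mod_cast finrank_le_rank_projMat_mul hcpos hc
      exact mul_nonpos_of_nonpos_of_nonneg (by linarith) hδ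
  rw [dG, eigs_projMat_mul, ← sqrt_sq hθ0, ← sqrt_mul (Nat.cast_nonneg d)]
  have hdδ : (d : ℝ) * δ = d * (π / 2) ^ 2 - d * θ ^ 2 := mul_sub _ _ _
  exact sqrt_le_sqrt (by linarith)

theorem exists_unit_mul_abs_inner_le_infDist {d : ℕ} (hd : 0 < d) {F : Submodule ℝ (E D)}
    (hF : Module.finrank ℝ F = d) (G : Submodule ℝ (E D)) :
    ∃ u ∈ F, ‖u‖ = 1 ∧
      ∀ x ∈ F, 2 / (π * √d) * dG d F G * |⟪x, u⟫| ≤ Metric.infDist x G := by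
  set hT := F.isSymmetric_starProjectionCompression G
  have : Nonempty (Fin d) := ⟨⟨0, hd⟩⟩
  obtain ⟨k, hk⟩ := Finite.exists_min (hT.eigenvalues hF)
  set m := hT.eigenvalues hF k
  set u := hT.eigenvectorBasis hF k
  have hm0 : 0 ≤ m := F.eigenvalues_starProjectionCompression_nonneg G hF k
  have hray : ∀ x ∈ F, m * ‖x‖ ^ 2 ≤ ⟪G.starProjection x, x⟫ := fun x hx => by
    have h := hT.mul_norm_sq_le_inner_apply_self hF hk ⟨x, hx⟩
    rwa [F.inner_starProjectionCompression] at h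
  -- Jordan's inequality `2θ/π ≤ sin θ` at the principal angle `θ = arccos √m`
  have hjordan : 2 / π * arccos √m ≤ √(1 - m) := by
    have := mul_le_sin (arccos_nonneg √m) (arccos_le_pi_div_two.2 (sqrt_nonneg m))
    rwa [sin_arccos, sq_sqrt hm0] at this
  refine ⟨u, u.2, (hT.eigenvectorBasis hF).norm_eq_one k, fun x hx => ?_⟩
  have hsd : 0 < √(d : ℝ) := sqrt_pos.2 (Nat.cast_pos.2 hd)
  calc 2 / (π * √d) * dG d F G * |⟪x, u⟫|
      ≤ 2 / (π * √d) * (√d * arccos √m) * |⟪x, u⟫| := by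
        gcongr
        exact dG_le_sqrt_mul_arccos hF hm0 hray
    _ = 2 / π * arccos √m * |⟪x, u⟫| := by field_simp
    _ ≤ √(1 - m) * |⟪x, u⟫| := by gcongr
    _ ≤ Metric.infDist x G :=
        F.sqrt_one_sub_eigenvalues_mul_abs_inner_le_infDist G hF k hx

end Grassmannian

section

variable {α : Type*} [MeasurableSpace α] {μ : Measure α}

theorem measureReal_iUnion_le_of_forall_mem {ι : Type*} [MeasurableSingletonClass α]
    [IsFiniteMeasure μ] [Fintype ι] {A : ι → Set α} {a : α} (ha : ∀ i, a ∈ A i) :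
    μ.real (⋃ i, A i) ≤ μ.real {a} + ∑ i, (μ.real (A i) - μ.real {a}) := by
  calc μ.real (⋃ i, A i) ≤ μ.real ({a} ∪ ⋃ i, (A i \ {a})) := by
        rw [← Set.iUnion_sdiff, Set.union_sdiff_self]
        exact measureReal_mono Set.subset_union_right
    _ ≤ μ.real {a} + ∑ i, μ.real (A i \ {a}) :=
        (measureReal_union_le _ _).trans (add_le_add_right (measureReal_iUnion_fintype_le _) _)
    _ = μ.real {a} + ∑ i, (μ.real (A i) - μ.real {a}) := by
        simp_rw [measureReal_sdiff (Set.singleton_subset_iff.2 (ha _)) (measurableSet_singleton a)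
          (measure_ne_top μ _)]

theorem one_sub_measureReal_le_of_ae_imp [IsProbabilityMeasure μ] {A B : Set α}
    (h : ∀ᵐ x ∂μ, x ∉ B → x ∈ A) :
    1 - μ.real B ≤ μ.real A := by
  have hBA : B ∪ A ∈ ae μ := h.mono fun x hx => by
    by_cases hB : x ∈ B
    exacts [Or.inl hB, Or.inr (hx hB)]
  have : μ.real (B ∪ A) = 1 := by
    rw [measureReal_congr (ae_eq_univ.2 (mem_ae_iff.1 hBA)), probReal_univ]
  linarith [measureReal_union_le (μ := μ) B A]

theorem pos_of_measureReal_setOf_abs_lt_pos {f : α → ℝ} {s : ℝ}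
    (h : 0 < μ.real {x | |f x| < s}) : 0 < s := by
  by_contra! hs
  have : {x | |f x| < s} = ∅ :=
    Set.eq_empty_of_forall_notMem fun x hx => (abs_nonneg _).not_gt (hx.trans_le hs)
  simp [this] at h

theorem rpow_mul_measureReal_le_integral_rpow {g : α → ℝ} (hg : ∀ x, 0 ≤ g x) {p : ℝ} (hp : 0 < p)
    (hint : Integrable (fun x => g x ^ p) μ) {t : ℝ} (ht : 0 ≤ t) :
    t ^ p * μ.real {x | t ≤ g x} ≤ ∫ x, g x ^ p ∂μ := by
  have hset : {x | t ≤ g x} = {x | t ^ p ≤ g x ^ p} := by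
    ext x
    exact (rpow_le_rpow_iff ht (hg x) hp).symm
  rw [hset]
  exact mul_meas_ge_le_integral_of_nonneg (ae_of_all _ fun x => rpow_nonneg (hg x) p) hint _

end

namespace Submodule

variable {F : Type*} [NormedAddCommGroup F] [InnerProductSpace ℝ F] {L : Submodule ℝ F}

theorem reflection_orthogonal_singleton_mem {w y : F} (hw : w ∈ L) (hy : y ∈ L) :
    (ℝ ∙ w)ᗮ.reflection y ∈ L := by
  have hproj : (ℝ ∙ w).starProjection y ∈ L :=
    (span_singleton_le_iff_mem w L).2 hw ((ℝ ∙ w).starProjection_apply_mem y)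
  rw [reflection_apply, starProjection_orthogonal_val]
  exact L.sub_mem (nsmul_mem (L.sub_mem hy hproj) 2) hy

theorem reflection_orthogonal_singleton_eq_self {w y : F} (hw : w ∈ L) (hy : y ∈ Lᗮ) :
    (ℝ ∙ w)ᗮ.reflection y = y :=
  reflection_mem_subspace_eq_self <|
    mem_orthogonal_singleton_iff_inner_right.2 (inner_right_of_mem_orthogonal hw hy)

variable [MeasurableSpace F] [BorelSpace F] {μ : Measure F}

theorem measure_setOf_inner_eq_of_invariant
    (hμ : ∀ R : F ≃ₗᵢ[ℝ] F, (∀ y ∈ L, R y ∈ L) → (∀ y, y ∈ Lᗮ → R y = y) → μ.map R = μ)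
    {u v : F} (hu : u ∈ L) (hv : v ∈ L) (huv : ‖u‖ = ‖v‖) (P : ℝ → Prop) :
    μ {x | P ⟪x, u⟫} = μ {x | P ⟪x, v⟫} := by
  set R := (ℝ ∙ (v - u))ᗮ.reflection
  have hRv : R v = u := reflection_sub huv.symm
  have hR := hμ R (fun y hy => reflection_orthogonal_singleton_mem (L.sub_mem hv hu) hy)
    (fun y hy => reflection_orthogonal_singleton_eq_self (L.sub_mem hv hu) hy)
  have hpre : R ⁻¹' {x | P ⟪x, u⟫} = {x | P ⟪x, v⟫} := by
    ext x
    change P ⟪R x, u⟫ ↔ P ⟪x, v⟫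
    rw [← hRv, LinearIsometryEquiv.inner_map_map]
  calc μ {x | P ⟪x, u⟫} = μ.map R {x | P ⟪x, u⟫} := by rw [hR]
    _ = μ {x | P ⟪x, v⟫} := by
      rw [← hpre]
      exact R.toHomeomorph.toMeasurableEquiv.map_apply _

theorem measureReal_iUnion_abs_inner_lt_le {ι : Type*} [Fintype ι] [IsFiniteMeasure μ]
    (hμ : ∀ R : F ≃ₗᵢ[ℝ] F, (∀ y ∈ L, R y ∈ L) → (∀ y, y ∈ Lᗮ → R y = y) → μ.map R = μ)
    {u : ι → F} {v : F} (hu : ∀ i, u i ∈ L) (hv : v ∈ L) (huv : ∀ i, ‖u i‖ = ‖v‖)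
    {s : ℝ} (hs : 0 < s) :
    μ.real (⋃ i, {x | |⟪x, u i⟫| < s})
      ≤ μ.real {0} + Fintype.card ι * (μ.real {x | |⟪x, v⟫| < s} - μ.real {0}) := by
  refine (measureReal_iUnion_le_of_forall_mem (a := 0) fun i => by simpa using hs).trans_eq ?_
  simp only [measureReal_def, measure_setOf_inner_eq_of_invariant hμ (hu _) hv (huv _)
    (fun t => |t| < s), Finset.sum_const, Finset.card_univ, nsmul_eq_mul]

end Submodule

theorem one_sub_measureReal_iUnion_abs_inner_lt_le {F ι : Type*} [NormedAddCommGroup F]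
    [InnerProductSpace ℝ F] [MeasurableSpace F] [Finite ι] [Nonempty ι]
    {μ : Measure F} [IsProbabilityMeasure μ] {L : Set F} (hL : ∀ᵐ x ∂μ, x ∈ L)
    {f : ι → F → ℝ} {u : ι → F} {a : ι → ℝ} {a₀ s : ℝ} (ha₀ : 0 ≤ a₀) (ha : ∀ i, a₀ ≤ a i)
    (hs : 0 ≤ s) (hf : ∀ i, ∀ x ∈ L, a i * |⟪x, u i⟫| ≤ f i x) :
    1 - μ.real (⋃ i, {x | |⟪x, u i⟫| < s}) ≤ μ.real {x | a₀ * s ≤ ⨅ i, f i x} := by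
  refine one_sub_measureReal_le_of_ae_imp (hL.mono fun x hx hxs => ?_)
  simp only [Set.mem_iUnion, Set.mem_ofPred_eq, not_exists, not_lt] at hxs
  exact le_ciInf fun i => (mul_le_mul (ha i) (hxs i) hs (ha₀.trans (ha i))).trans (hf i x hx)

theorem integrable_rpow_iInf_infDist {F ι : Type*} [NormedAddCommGroup F] [NormedSpace ℝ F]
    [MeasurableSpace F] [OpensMeasurableSpace F] [Finite ι] [Nonempty ι]
    {μ : Measure F} [IsFiniteMeasure μ] (hμ : ∀ᵐ x ∂μ, ‖x‖ ≤ 1)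
    (L : ι → Submodule ℝ F) {p : ℝ} (hp : 0 ≤ p) :
    Integrable (fun x => (⨅ i, Metric.infDist x (L i : Set F)) ^ p) μ := by
  refine .of_bound ((Measurable.iInf fun i => (Metric.continuous_infDist_pt _).measurable).pow_const
    p).aestronglyMeasurable 1 (hμ.mono fun x hx => ?_)
  obtain ⟨i⟩ := ‹Nonempty ι›
  have h0 : 0 ≤ ⨅ i, Metric.infDist x (L i : Set F) :=
    iInf_nonneg fun _ => Metric.infDist_nonneg
  have h1 : ⨅ i, Metric.infDist x (L i : Set F) ≤ 1 :=
    calc ⨅ i, Metric.infDist x (L i : Set F) ≤ Metric.infDist x (L i : Set F) :=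
          ciInf_le (Set.finite_range _).bddBelow i
      _ ≤ ‖x‖ := by simpa using Metric.infDist_le_dist_of_mem (L i).zero_mem
      _ ≤ 1 := hx
  rw [norm_of_nonneg (rpow_nonneg h0 p)]
  exact rpow_le_one h0 h1 hp

theorem lp_energy_lower_bound_general
    (D d K : ℕ) (hd : 0 < d) (hK : 0 < K)
    (p ε : ℝ) (hp : 0 < p) (hε : 0 ≤ ε)
    (L₁ : Submodule ℝ (E D)) (hL₁ : Module.finrank ℝ L₁ = d)
    (μ₁ : Measure (E D)) [IsProbabilityMeasure μ₁]
    (hsupp : μ₁ ((Metric.closedBall (0 : E D) 1 ∩ (L₁ : Set (E D)))ᶜ) = 0)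
    (hsph : ∀ R : E D ≃ₗᵢ[ℝ] E D, (∀ y ∈ L₁, R y ∈ L₁) →
      (∀ y, y ∈ L₁ᗮ → R y = y) → μ₁.map R = μ₁)
    (hzero : (μ₁ {0}).toReal < 1)
    (v : E D) (hv : ‖v‖ = 1) (hvmem : v ∈ L₁)
    (s : ℝ)
    (hs : (μ₁ {x : E D | |(inner ℝ x v : ℝ)| < s}).toReal
      = (1 + (2 * (K : ℝ) - 1) * (μ₁ {(0 : E D)}).toReal) / (2 * K))
    (Lhat : Fin K → Submodule ℝ (E D))
    (hfar : ∀ j, ε < dG d L₁ (Lhat j)) :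
    ((1 - (μ₁ {(0 : E D)}).toReal) * (2 : ℝ) ^ (p - 1) * s ^ p
        / (Real.pi * Real.sqrt d) ^ p) * ε ^ p
      < ∫ x, (⨅ j, Metric.infDist x (Lhat j : Set (E D))) ^ p ∂μ₁ := by
  simp only [← measureReal_def] at hs hzero ⊢
  set μ₀ := μ₁.real {(0 : E D)}
  have hK1 : (1 : ℝ) ≤ K := Nat.one_le_cast.2 hK
  have hs_pos : 0 < s := pos_of_measureReal_setOf_abs_lt_pos <| hs ▸
    div_pos (by nlinarith [measureReal_nonneg (μ := μ₁) (s := {0})]) (by positivity)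
  have hS : ∀ᵐ x ∂μ₁, x ∈ Metric.closedBall 0 1 ∩ (L₁ : Set (E D)) := mem_ae_iff.2 hsupp
  choose u huL hu hdist using fun j => exists_unit_mul_abs_inner_le_infDist hd hL₁ (Lhat j)
  have : Nonempty (Fin K) := ⟨⟨0, hK⟩⟩
  obtain ⟨j₀, hj₀⟩ := Finite.exists_min fun j => dG d L₁ (Lhat j)
  set c := 2 / (π * √d)
  have hc : 0 < c := div_pos two_pos (mul_pos pi_pos (sqrt_pos.2 (Nat.cast_pos.2 hd)))
  set t := c * dG d L₁ (Lhat j₀) * s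
  have ht : 0 ≤ t := mul_nonneg (mul_nonneg hc.le (hε.trans (hfar j₀).le)) hs_pos.le
  have hbad : μ₁.real (⋃ j, {x | |⟪x, u j⟫| < s}) ≤ (1 + μ₀) / 2 := by
    refine (L₁.measureReal_iUnion_abs_inner_lt_le hsph huL hvmem
      (fun j => (hu j).trans hv.symm) hs_pos).trans_eq ?_
    rw [hs, Fintype.card_fin]
    field_simp
    ring
  have hgood := one_sub_measureReal_iUnion_abs_inner_lt_le (hS.mono fun x hx => hx.2)
    (mul_nonneg hc.le (hε.trans (hfar j₀).le)) (fun j => mul_le_mul_of_nonneg_left (hj₀ j) hc.le)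
    hs_pos.le hdist
  calc _ = (1 - μ₀) / 2 * (c * ε * s) ^ p := by
        rw [mul_rpow (by positivity) hs_pos.le, mul_rpow hc.le hε,
          div_rpow zero_le_two (by positivity), rpow_sub two_pos, rpow_one]
        ring
    _ < (1 - μ₀) / 2 * t ^ p := by
        gcongr
        exact mul_lt_mul_of_pos_right (mul_lt_mul_of_pos_left (hfar j₀) hc) hs_pos
    _ ≤ t ^ p * μ₁.real {x | t ≤ ⨅ j, Metric.infDist x (Lhat j : Set (E D))} := by
        rw [mul_comm]
        exact mul_le_mul_of_nonneg_left (by linarith) (rpow_nonneg ht p)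
    _ ≤ _ := rpow_mul_measureReal_le_integral_rpow
        (fun x => iInf_nonneg fun _ => Metric.infDist_nonneg) hp
        (integrable_rpow_iInf_infDist (hS.mono fun x hx => mem_closedBall_zero_iff.1 hx.1) Lhat
          hp.le) ht

/-- if `μ₁` is a spherically symmetric probability distribution supported in
`B(0,1) ∩ L₁` with `μ₁({0}) < 1`, and every `L̂_j` is at `d_G`-distance more than `ε` from
`L₁`, then `E_{μ₁}[min_j dist(x, L̂_j)^p] > τ₀ ε^p`. -/
theorem lp_energy_lower_bound
    (D d K : ℕ) (hd : 0 < d) (hdD : d < D) (hK : 0 < K)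
    (p ε : ℝ) (hp : 0 < p) (hε : 0 ≤ ε)
    (L₁ : Submodule ℝ (E D)) (hL₁ : Module.finrank ℝ L₁ = d)
    (μ₁ : Measure (E D)) [IsProbabilityMeasure μ₁]
    (hsupp : μ₁ ((Metric.closedBall (0 : E D) 1 ∩ (L₁ : Set (E D)))ᶜ) = 0)
    (hsph : ∀ R : E D ≃ₗᵢ[ℝ] E D, (∀ y ∈ L₁, R y ∈ L₁) →
      (∀ y, y ∈ L₁ᗮ → R y = y) → μ₁.map R = μ₁)
    (hzero : (μ₁ {0}).toReal < 1)
    (v : E D) (hv : ‖v‖ = 1) (hvmem : v ∈ L₁)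
    (s : ℝ)
    (hs : (μ₁ {x : E D | |(inner ℝ x v : ℝ)| < s}).toReal
      = (1 + (2 * (K : ℝ) - 1) * (μ₁ {(0 : E D)}).toReal) / (2 * K))
    (Lhat : Fin K → Submodule ℝ (E D))
    (hrank : ∀ j, Module.finrank ℝ (Lhat j) = d)
    (hfar : ∀ j, ε < dG d L₁ (Lhat j)) :
    ((1 - (μ₁ {(0 : E D)}).toReal) * (2 : ℝ) ^ (p - 1) * s ^ p
        / (Real.pi * Real.sqrt d) ^ p) * ε ^ p
      < ∫ x, (⨅ j, Metric.infDist x (Lhat j : Set (E D))) ^ p ∂μ₁ :=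
  lp_energy_lower_bound_general D d K hd hK p ε hp hε L₁ hL₁ μ₁ hsupp hsph hzero v hv hvmem s hs
    Lhat hfar
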